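/- arXiv:1310.3302 — 2 statements merged into one kernel-verified Lean document; each statement's English description precedes it below -/
import Mathlib

section
/- Let γ½, δ, N be complex numbers and set γ := (γ½)². Define Num := γ½·(γ − 2(2N + 1)δ + (N + 1/2)² − 3)·(γ − Nδ − 3/4) and Den := (γ − 3(N + 1)δ − 3/4)·(γ − (N − 1/2)(2δ + N + 1/2))·γ½ (these are the numerator B¹_{n+3,n+1/2}·B⁰_{n+5/2,n} and denominator B¹_{n+3,n+3/2}·B¹_{n+5/2,n+1/2}·B⁰_{n+3/2,n} of the length-7 invariant J⁰_n, with N = N₆ = n + 1). If Num − Den ≠ 0, then γ − δ² − (2N + 1)δ − 3/4 ≠ 0 and 2(N − 1)(N + 3/2)·Den/(Num − Den) = [(γ − (N − 1/2)(2δ + N + 1/2))·(γ − 3(N + 1)δ − 3/4)] / [γ − δ² − (2N + 1)δ − 3/4]. -/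
/-! Substituting `γ = g²`, the difference `Num − Den` factors as
`2(N − 1)(N + 3/2) · g · (γ − δ² − (2N + 1)δ − 3/4)`, while `Den` is `g` times the product
in the claimed numerator. So `Num − Den ≠ 0` forces the last factor to be nonzero, and the
common factor `2(N − 1)(N + 3/2) · g` cancels from the quotient. -/

lemma ne_zero_and_mul_div_sub_eq_div {K : Type*} [Field K] {a b c g P Q : K}
    (hb : b = P * g) (hab : a - b = c * g * Q) (h : a - b ≠ 0) :
    Q ≠ 0 ∧ c * b / (a - b) = P / Q := by
  rw [hab] at h ⊢
  obtain ⟨hcg, hQ⟩ := mul_ne_zero_iff.mp h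
  refine ⟨hQ, ?_⟩
  rw [hb, div_eq_div_iff h hQ]
  ring

/-- The modified length-7 invariant `J̃⁰_n`: with `Num` and `Den` the numerator
`B¹_{n+3,n+1/2}·B⁰_{n+5/2,n}` and denominator
`B¹_{n+3,n+3/2}·B¹_{n+5/2,n+1/2}·B⁰_{n+3/2,n}` of `J⁰_n` (where `N = N₆ = n+1`
and `γ = (γ½)²`), if `Num − Den ≠ 0` then `γ − δ² − (2N+1)δ − 3/4 ≠ 0` and
`2(N−1)(N+3/2)·Den/(Num−Den)` equals the stated ratio. -/
theorem J0_tilde (g δ N : ℂ) (γ Num Den : ℂ)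
    (hγ : γ = g ^ 2)
    (hNum : Num = g * ((γ - 2 * (2 * N + 1) * δ + (N + 1/2) ^ 2 - 3) * (γ - N * δ - 3/4)))
    (hDen : Den = (γ - 3 * (N + 1) * δ - 3/4) * (γ - (N - 1/2) * (2 * δ + N + 1/2)) * g)
    (h : Num - Den ≠ 0) :
    γ - δ ^ 2 - (2 * N + 1) * δ - 3/4 ≠ 0 ∧
    2 * (N - 1) * (N + 3/2) * Den / (Num - Den) =
      (γ - (N - 1/2) * (2 * δ + N + 1/2)) * (γ - 3 * (N + 1) * δ - 3/4) /
        (γ - δ ^ 2 - (2 * N + 1) * δ - 3/4) := by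
  have num_sub_den : Num - Den =
      2 * (N - 1) * (N + 3/2) * g * (γ - δ ^ 2 - (2 * N + 1) * δ - 3/4) := by
    subst hγ hNum hDen
    ring
  exact ne_zero_and_mul_div_sub_eq_div (hDen.trans (by ring)) num_sub_den h
end

section
/- Let γ, δ, N be complex numbers and set γ̃ := γ − (5/2)Nδ. Define P₁ := (γ − (2N + 3)δ − (N + 1/2)(N + 3/2))·(γ − 3(N − 1)δ − 3/4) and P₂ := (γ − 3(N + 1)δ − 3/4)·(γ − (2N − 3)δ − (N − 1/2)(N − 3/2)). If P₁ − P₂ ≠ 0, then 4γ̃ − 6δ² + 4Nδ − 3 ≠ 0 and −2N·(P₁ + P₂)/(P₁ − P₂) = [4γ̃² − (N² + 36)δ² − 2(2N² + 3)γ̃ + 2N(N² − 12)δ + 3(N² + 3/4)] / [4γ̃ − 6δ² + 4Nδ − 3]. -/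
/-!
Both `P₁ − P₂` and `P₁ + P₂` are polynomials in `γ̃, δ, N`, and the first factors as
`P₁ − P₂ = −N (4γ̃ − 6δ² + 4Nδ − 3)`, while `2(P₁ + P₂)` is the stated numerator. Hence
`P₁ − P₂ ≠ 0` forces both `N ≠ 0` and the denominator to be nonzero, and the factor `−N`
cancels from `−2N (P₁ + P₂) / (P₁ − P₂)`.
-/

section LacunaryProducts

variable {K : Type*} [Field K] [CharZero K] (γ δ N : K)

lemma lacunary_products_sub :
    (γ - (2 * N + 3) * δ - (N + 1/2) * (N + 3/2)) * (γ - 3 * (N - 1) * δ - 3/4) -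
        (γ - 3 * (N + 1) * δ - 3/4) * (γ - (2 * N - 3) * δ - (N - 1/2) * (N - 3/2)) =
      -N * (4 * (γ - 5/2 * N * δ) - 6 * δ ^ 2 + 4 * N * δ - 3) := by
  ring

lemma lacunary_products_add :
    2 * ((γ - (2 * N + 3) * δ - (N + 1/2) * (N + 3/2)) * (γ - 3 * (N - 1) * δ - 3/4) +
        (γ - 3 * (N + 1) * δ - 3/4) * (γ - (2 * N - 3) * δ - (N - 1/2) * (N - 3/2))) =
      4 * (γ - 5/2 * N * δ) ^ 2 - (N ^ 2 + 36) * δ ^ 2 - 2 * (2 * N ^ 2 + 3) * (γ - 5/2 * N * δ) +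
        2 * N * (N ^ 2 - 12) * δ + 3 * (N ^ 2 + 3/4) := by
  ring

end LacunaryProducts

lemma ne_zero_and_div_eq_of_sub_eq_neg_mul {K : Type*} [Field K] {p q c d : K}
    (hpq : p - q = -c * d) (h : p - q ≠ 0) :
    d ≠ 0 ∧ -2 * c * (p + q) / (p - q) = 2 * (p + q) / d := by
  rw [hpq] at h ⊢
  obtain ⟨hc, hd⟩ := mul_ne_zero_iff.mp h
  refine ⟨hd, ?_⟩
  field_simp [neg_ne_zero.mp hc]

/-- The modified lacunary length-4 invariant `M̃¹_n` in the coordinate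
`γ̃₈ = γ − (5/2)N₈δ` (here `N = N₈ = n + 3/2`): with `P₁` and `P₂` the two
products appearing in `M¹_n`, if `P₁ − P₂ ≠ 0` then `4γ̃ − 6δ² + 4Nδ − 3 ≠ 0`
and `−2N(P₁ + P₂)/(P₁ − P₂)` equals the stated ratio. -/
theorem M1_tilde (γ δ N γt P₁ P₂ : ℂ)
    (hγt : γt = γ - (5/2) * N * δ)
    (hP₁ : P₁ = (γ - (2 * N + 3) * δ - (N + 1/2) * (N + 3/2)) * (γ - 3 * (N - 1) * δ - 3/4))
    (hP₂ : P₂ = (γ - 3 * (N + 1) * δ - 3/4) * (γ - (2 * N - 3) * δ - (N - 1/2) * (N - 3/2)))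
    (h : P₁ - P₂ ≠ 0) :
    4 * γt - 6 * δ ^ 2 + 4 * N * δ - 3 ≠ 0 ∧
    -2 * N * (P₁ + P₂) / (P₁ - P₂) =
      (4 * γt ^ 2 - (N ^ 2 + 36) * δ ^ 2 - 2 * (2 * N ^ 2 + 3) * γt +
          2 * N * (N ^ 2 - 12) * δ + 3 * (N ^ 2 + 3/4)) /
        (4 * γt - 6 * δ ^ 2 + 4 * N * δ - 3) := by
  subst hγt hP₁ hP₂
  rw [← lacunary_products_add]
  exact ne_zero_and_div_eq_of_sub_eq_neg_mul (lacunary_products_sub γ δ N) h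
end
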